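/- Fix reals 0 < L < M < H with 2L < M, L + H < 2M, and L + M < H. Consider the path auction on the triangle network with n = 3 agents, feasible allocations (1,1,0) (the two-edge path, agents 1 and 2) and (0,0,1) (the direct edge, agent 3), and any algorithm A : {L,M,H}³ → {(1,1,0),(0,0,1)} selecting a minimum-cost path: if θ_1 + θ_2 < θ_3 then A(θ) = (1,1,0), and if θ_3 < θ_1 + θ_2 then A(θ) = (0,0,1) (ties broken arbitrarily). Then for every payment function p, the mechanism (A,p) is not bribeproof. -/

import Mathlib

open Function Finset

noncomputable section

/-- Utility of agent `i` with true per-unit cost `t` when the reported vector is `θhat`. -/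
def utility {n : ℕ} (A p : (Fin n → ℝ) → Fin n → ℝ) (θhat : Fin n → ℝ) (i : Fin n) (t : ℝ) : ℝ :=
  p θhat i - A θhat i * t

/-- `θ` belongs to the product domain `Θ = Θ_1 × ⋯ × Θ_n`. -/
def InDomain {n : ℕ} (Θ : Fin n → Set ℝ) (θ : Fin n → ℝ) : Prop := ∀ k, θ k ∈ Θ k

/-- Bribeproofness: no agent `j` can bribe an agent `i` into a unilateral misreport
so that their joint utility improves (taking `i = j` gives strategyproofness). -/
def Bribeproof {n : ℕ} (Θ : Fin n → Set ℝ) (A p : (Fin n → ℝ) → Fin n → ℝ) : Prop :=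
  ∀ θ, InDomain Θ θ → ∀ i j : Fin n, ∀ x ∈ Θ i,
    utility A p θ i (θ i) + utility A p θ j (θ j) ≥
      utility A p (Function.update θ i x) i (θ i) +
        utility A p (Function.update θ i x) j (θ j)

/-- Strong bribeproofness: additionally no two distinct agents can jointly misreport
so that their joint utility improves. -/
def StronglyBribeproof {n : ℕ} (Θ : Fin n → Set ℝ) (A p : (Fin n → ℝ) → Fin n → ℝ) : Prop :=
  Bribeproof Θ A p ∧
    ∀ θ, InDomain Θ θ → ∀ i j : Fin n, i ≠ j → ∀ x ∈ Θ i, ∀ y ∈ Θ j,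
      utility A p θ i (θ i) + utility A p θ j (θ j) ≥
        utility A p (Function.update (Function.update θ i x) j y) i (θ i) +
          utility A p (Function.update (Function.update θ i x) j y) j (θ j)

/-- Collusion-proofness: no coalition `C` can improve its total utility by a joint
misreport of the types of (some of) its members. -/
def CollusionProof {n : ℕ} (Θ : Fin n → Set ℝ) (A p : (Fin n → ℝ) → Fin n → ℝ) : Prop :=
  ∀ θ, InDomain Θ θ → ∀ C : Finset (Fin n), ∀ θhat, InDomain Θ θhat →
    (∀ k, k ∉ C → θhat k = θ k) →
    ∑ i ∈ C, utility A p θ i (θ i) ≥ ∑ i ∈ C, utility A p θhat i (θ i)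

/-- `Δ^i_k(θ_{-i}) = A_k(L, θ_{-i}) - A_k(H, θ_{-i})`. -/
def Delta {n : ℕ} (A : (Fin n → ℝ) → Fin n → ℝ) (L H : ℝ) (θ : Fin n → ℝ) (i k : Fin n) : ℝ :=
  A (Function.update θ i L) k - A (Function.update θ i H) k


section Aux

lemma upd0 (a b c x : ℝ) : Function.update ![a,b,c] (0 : Fin 3) x = ![x,b,c] := by
  funext i; fin_cases i <;> simp [Function.update]

lemma upd1 (a b c x : ℝ) : Function.update ![a,b,c] (1 : Fin 3) x = ![a,x,c] := by
  funext i; fin_cases i <;> simp [Function.update]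

lemma indom3 {L M H a b c : ℝ} (ha : a ∈ ({L,M,H} : Set ℝ)) (hb : b ∈ ({L,M,H} : Set ℝ))
    (hc : c ∈ ({L,M,H} : Set ℝ)) :
    InDomain (fun _ => ({L, M, H} : Set ℝ)) ![a,b,c] := by
  intro k; fin_cases k <;> simpa

lemma in_dom_update {n : ℕ} {Θ : Fin n → Set ℝ} {θ : Fin n → ℝ} (hθ : InDomain Θ θ)
    {i : Fin n} {x : ℝ} (hx : x ∈ Θ i) : InDomain Θ (Function.update θ i x) := by
  intro k
  rcases eq_or_ne k i with rfl | hk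
  · simpa using hx
  · simpa [Function.update_of_ne hk] using hθ k

/-- If a unilateral change of report by agent `i` does not change the allocation, then
bribeproofness forces all payments to stay the same. -/
lemma pay_const {n : ℕ} {Θ : Fin n → Set ℝ} {A p : (Fin n → ℝ) → Fin n → ℝ}
    (hB : Bribeproof Θ A p) {θ : Fin n → ℝ} (hθ : InDomain Θ θ) {i : Fin n} {x : ℝ}
    (hx : x ∈ Θ i) (hA : A (Function.update θ i x) = A θ) (j : Fin n) :
    p (Function.update θ i x) j = p θ j := by
  have hθ' : InDomain Θ (Function.update θ i x) := in_dom_update hθ hx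
  have key : ∀ j : Fin n, p (Function.update θ i x) i + p (Function.update θ i x) j
      = p θ i + p θ j := by
    intro j
    have h1 := hB θ hθ i j x hx
    have h2 := hB (Function.update θ i x) hθ' i j (θ i) (hθ i)
    rw [Function.update_idem, Function.update_eq_self] at h2
    simp only [utility, hA] at h1 h2
    have hi : Function.update θ i x i = x := Function.update_self i x θ
    rcases eq_or_ne j i with rfl | hj
    · rw [hi] at h2; linarith
    · rw [hi, Function.update_of_ne hj] at h2; linarith
  have hii := key i
  have hij := key j
  linarith

end Aux

theorem stmt_13 (L M H : ℝ) (h0L : 0 < L) (hLM : L < M) (hMH : M < H)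
    (hc1 : 2 * L < M) (hc2 : L + H < 2 * M) (hc3 : L + M < H)
    (A p : (Fin 3 → ℝ) → Fin 3 → ℝ)
    (hfeas : ∀ θ, InDomain (fun _ => ({L, M, H} : Set ℝ)) θ →
      A θ = (![1, 1, 0] : Fin 3 → ℝ) ∨ A θ = (![0, 0, 1] : Fin 3 → ℝ))
    (hup : ∀ θ, InDomain (fun _ => ({L, M, H} : Set ℝ)) θ →
      θ 0 + θ 1 < θ 2 → A θ = (![1, 1, 0] : Fin 3 → ℝ))
    (hdown : ∀ θ, InDomain (fun _ => ({L, M, H} : Set ℝ)) θ →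
      θ 2 < θ 0 + θ 1 → A θ = (![0, 0, 1] : Fin 3 → ℝ)) :
    ¬ Bribeproof (fun _ => ({L, M, H} : Set ℝ)) A p := by
  intro hB
  have hLmem : L ∈ ({L,M,H} : Set ℝ) := by simp
  have hMmem : M ∈ ({L,M,H} : Set ℝ) := by simp
  have hHmem : H ∈ ({L,M,H} : Set ℝ) := by simp
  -- domains
  have dMLH := indom3 hMmem hLmem hHmem
  have dLLH := indom3 hLmem hLmem hHmem
  have dLMH := indom3 hLmem hMmem hHmem
  have dHLH := indom3 hHmem hLmem hHmem
  have dHHH := indom3 hHmem hHmem hHmem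
  have dLHH := indom3 hLmem hHmem hHmem
  -- allocations
  have aMLH : A ![M,L,H] = ![1,1,0] := hup _ dMLH (by show M + L < H; linarith)
  have aLLH : A ![L,L,H] = ![1,1,0] := hup _ dLLH (by show L + L < H; linarith)
  have aLMH : A ![L,M,H] = ![1,1,0] := hup _ dLMH (by show L + M < H; linarith)
  have aHLH : A ![H,L,H] = ![0,0,1] := hdown _ dHLH (by show H < H + L; linarith)
  have aHHH : A ![H,H,H] = ![0,0,1] := hdown _ dHHH (by show H < H + H; linarith)
  have aLHH : A ![L,H,H] = ![0,0,1] := hdown _ dLHH (by show H < L + H; linarith)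
  -- payment equalities across allocation-preserving unilateral changes
  have e1 : ∀ j, p ![L,L,H] j = p ![M,L,H] j := by
    intro j
    have := pay_const hB dMLH hLmem (x := L) (i := 0) (by rw [upd0, aLLH, aMLH]) j
    rwa [upd0] at this
  have e2 : ∀ j, p ![L,M,H] j = p ![L,L,H] j := by
    intro j
    have := pay_const hB dLLH hMmem (x := M) (i := 1) (by rw [upd1, aLMH, aLLH]) j
    rwa [upd1] at this
  have e3 : ∀ j, p ![H,H,H] j = p ![H,L,H] j := by
    intro j
    have := pay_const hB dHLH hHmem (x := H) (i := 1) (by rw [upd1, aHHH, aHLH]) j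
    rwa [upd1] at this
  have e4 : ∀ j, p ![L,H,H] j = p ![H,H,H] j := by
    intro j
    have := pay_const hB dHHH hLmem (x := L) (i := 0) (by rw [upd0, aLHH, aHHH]) j
    rwa [upd0] at this
  -- strategyproofness for agent 0 at (M,L,H) misreporting H
  have s0 := hB ![M,L,H] dMLH 0 0 H hHmem
  rw [upd0] at s0
  simp only [utility, aMLH, aHLH] at s0
  norm_num at s0
  -- strategyproofness for agent 1 at (L,M,H) misreporting H
  have s1 := hB ![L,M,H] dLMH 1 1 H hHmem
  rw [upd1] at s1
  simp only [utility, aLMH, aLHH] at s1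
  norm_num at s1
  -- the bribe: at (H,L,H), agent 0 misreports M, paired with agent 1
  have br := hB ![H,L,H] dHLH 0 1 M hMmem
  rw [upd0] at br
  simp only [utility, aHLH, aMLH] at br
  norm_num at br
  have q0 := e1 0
  have q1 := e1 1
  have r1 := e2 1
  have t1 := e3 1
  have u1 := e4 1
  linarith
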